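/- arXiv:2203.00643 — 5 statements merged into one kernel-verified Lean document; each statement's English description precedes it below -/
import Mathlib

section
/- The map H from partitions of {0,1,...,n} to subsets of {1,...,n}, defined by sending a partition {U_1,...,U_k} to the union of the sets U_i \ {min U_i}, is surjective. -/
/-! Put `0` and all of `A` into one block and every other point of `{0, …, n}` into a singleton.
The big block contributes `A`, because its minimum is `0 ∉ A`, and singletons contribute
nothing. -/

/-- The map `H` sending a partition of `{0,1,...,n}` to the union of the sets
`U \ {min U}` over its blocks `U`. -/
def H {n : ℕ} (P : Finpartition (Finset.range (n + 1))) : Finset ℕ :=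
  P.parts.attach.sup fun U => U.1.erase (U.1.min' (P.nonempty_of_mem_parts U.2))

theorem Finset.mem_erase_min'_iff {α : Type*} [LinearOrder α] {s : Finset α} (hs : s.Nonempty)
    {x : α} : x ∈ s.erase (s.min' hs) ↔ x ∈ s ∧ ∃ y ∈ s, y < x := by
  rw [Finset.mem_erase]
  constructor
  · rintro ⟨hne, hx⟩
    exact ⟨hx, _, s.min'_mem hs, lt_of_le_of_ne (s.min'_le x hx) (Ne.symm hne)⟩
  · rintro ⟨hx, y, hy, hyx⟩
    exact ⟨(lt_of_le_of_lt (s.min'_le y hy) hyx).ne', hx⟩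

theorem mem_H_iff {n : ℕ} {P : Finpartition (Finset.range (n + 1))} {x : ℕ} :
    x ∈ H P ↔ ∃ U ∈ P.parts, x ∈ U ∧ ∃ y ∈ U, y < x := by
  simp only [H, Finset.mem_sup, Finset.mem_attach, true_and, Subtype.exists,
    exists_prop, Finset.mem_erase_min'_iff]

namespace Finpartition

variable {α : Type*} [DecidableEq α]

def blockAndSingletons {s B : Finset α} (hB : B.Nonempty) (hBs : B ⊆ s) : Finpartition s :=
  (⊥ : Finpartition (s \ B)).extend hB.ne_empty disjoint_sdiff_self_left
    (Finset.sdiff_union_of_subset hBs)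

theorem mem_blockAndSingletons_parts {s B U : Finset α} {hB : B.Nonempty} {hBs : B ⊆ s} :
    U ∈ (blockAndSingletons hB hBs).parts ↔ U = B ∨ ∃ x ∈ s \ B, {x} = U := by
  simp [blockAndSingletons]

end Finpartition

theorem H_blockAndSingletons {n : ℕ} {B : Finset ℕ} (hB : B.Nonempty)
    (hBs : B ⊆ Finset.range (n + 1)) :
    H (Finpartition.blockAndSingletons hB hBs) = B.erase (B.min' hB) := by
  ext x
  rw [mem_H_iff, Finset.mem_erase_min'_iff]
  constructor
  · rintro ⟨U, hU, hxU⟩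
    rcases Finpartition.mem_blockAndSingletons_parts.1 hU with rfl | ⟨z, -, rfl⟩
    · exact hxU
    · obtain ⟨hxz, y, hyz, hyx⟩ := hxU
      rw [Finset.mem_singleton] at hxz hyz
      omega
  · exact fun hx => ⟨B, Finpartition.mem_blockAndSingletons_parts.2 (Or.inl rfl), hx⟩

theorem stmt_1 (n : ℕ) (A : Finset ℕ) (hA : A ⊆ Finset.Icc 1 n) :
    ∃ P : Finpartition (Finset.range (n + 1)), H P = A := by
  have h0A : 0 ∉ A := fun h => by simpa using hA h
  have hsub : insert 0 A ⊆ Finset.range (n + 1) := by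
    refine Finset.insert_subset (by simp) fun x hx => ?_
    simpa [Nat.lt_succ_iff] using (Finset.mem_Icc.1 (hA hx)).2
  refine ⟨Finpartition.blockAndSingletons (Finset.insert_nonempty 0 A) hsub, ?_⟩
  have hmin : (insert 0 A).min' (Finset.insert_nonempty 0 A) = 0 :=
    Nat.le_zero.1 (Finset.min'_le _ 0 (Finset.mem_insert_self 0 A))
  rw [H_blockAndSingletons, hmin, Finset.erase_insert h0A]
end

section
/- If a partition 𝒱 of {0,1,...,n} covers a partition 𝒰 in the refinement order (i.e., 𝒱 is obtained from 𝒰 by merging exactly two blocks), then H(𝒱) = H(𝒰) ∪ {m}, where m is the larger of the two minima of the merged blocks; in particular H(𝒱) has exactly one more element than H(𝒰). -/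
namespace Finset

variable {α : Type*} [LinearOrder α] {s t : Finset α}

/-- A proof-free form of `s.erase (s.min' h)`, which can be taken over all parts at once. -/
def eraseMin (s : Finset α) : Finset α := s.filter fun x => ∃ y ∈ s, y < x

theorem eraseMin_eq_erase_min' (hs : s.Nonempty) : s.eraseMin = s.erase (s.min' hs) := by
  ext x
  simp only [eraseMin, mem_filter, mem_erase]
  constructor
  · rintro ⟨hx, y, hy, hyx⟩
    exact ⟨((s.min'_le y hy).trans_lt hyx).ne', hx⟩
  · rintro ⟨hne, hx⟩
    exact ⟨hx, s.min' hs, s.min'_mem hs, lt_of_le_of_ne (s.min'_le x hx) hne.symm⟩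

theorem eraseMin_union (hst : Disjoint s t) (hs : s.Nonempty) (ht : t.Nonempty) :
    (s ∪ t).eraseMin = insert (max (s.min' hs) (t.min' ht)) (s.eraseMin ∪ t.eraseMin) := by
  wlog hle : s.min' hs ≤ t.min' ht generalizing s t
  · rw [union_comm, union_comm s.eraseMin, max_comm]
    exact this hst.symm ht hs (le_of_not_ge hle)
  have hts_min : s.min' hs ∉ t := disjoint_left.1 hst (s.min'_mem hs)
  rw [eraseMin_eq_erase_min' (hs.mono subset_union_left), min'_union hs ht, min_eq_left hle,
    max_eq_right hle, eraseMin_eq_erase_min' hs, eraseMin_eq_erase_min' ht, erase_union_distrib,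
    erase_eq_of_notMem hts_min, ← union_insert, insert_erase (t.min'_mem ht)]

theorem sup_eraseMin_insert_union_sdiff {𝒜 : Finset (Finset α)} {A B : Finset α} (hA : A ∈ 𝒜)
    (hB : B ∈ 𝒜) (hAB : Disjoint A B) (hA' : A.Nonempty) (hB' : B.Nonempty) :
    (insert (A ∪ B) (𝒜 \ {A, B})).sup eraseMin =
      insert (max (A.min' hA') (B.min' hB')) (𝒜.sup eraseMin) := by
  conv_rhs => rw [← union_sdiff_of_subset (insert_subset hA (singleton_subset_iff.2 hB))]
  rw [sup_insert, sup_union, eraseMin_union hAB hA' hB', sup_insert, sup_singleton]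
  simp only [sup_eq_union, insert_union]

end Finset

namespace Finpartition

open Finset

variable {α : Type*} [LinearOrder α] {s U : Finset α} {x : α}

theorem mem_sup_eraseMin_iff (P : Finpartition s) (hU : U ∈ P.parts) (hx : x ∈ U) :
    x ∈ P.parts.sup eraseMin ↔ x ∈ U.eraseMin := by
  refine ⟨fun h => ?_, fun h => mem_sup.2 ⟨U, hU, h⟩⟩
  obtain ⟨V, hV, hxV⟩ := mem_sup.1 h
  rwa [P.eq_of_mem_parts hU hV hx (mem_filter.1 hxV).1]

theorem min'_notMem_sup_eraseMin (P : Finpartition s) (hU : U ∈ P.parts) (hU' : U.Nonempty) :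
    U.min' hU' ∉ P.parts.sup eraseMin := by
  rw [P.mem_sup_eraseMin_iff hU (U.min'_mem hU'), eraseMin_eq_erase_min' hU']
  exact notMem_erase _ _

end Finpartition

open Finset

theorem H_eq_sup_eraseMin {n : ℕ} (P : Finpartition (range (n + 1))) :
    H P = P.parts.sup eraseMin := by
  rw [H, ← sup_attach P.parts eraseMin]
  exact sup_congr rfl fun U _ => (eraseMin_eq_erase_min' (P.nonempty_of_mem_parts U.2)).symm

theorem stmt_4 (n : ℕ) (P Q : Finpartition (Finset.range (n + 1)))
    (A B : Finset ℕ) (hA : A ∈ P.parts) (hB : B ∈ P.parts) (hAB : A ≠ B)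
    (hQ : Q.parts = insert (A ∪ B) (P.parts \ {A, B})) :
    H Q = insert
      (max (A.min' (P.nonempty_of_mem_parts hA)) (B.min' (P.nonempty_of_mem_parts hB))) (H P) ∧
    (H Q).card = (H P).card + 1 := by
  set m := max (A.min' (P.nonempty_of_mem_parts hA)) (B.min' (P.nonempty_of_mem_parts hB))
  have hQP : H Q = insert m (H P) := by
    rw [H_eq_sup_eraseMin, H_eq_sup_eraseMin, hQ]
    exact sup_eraseMin_insert_union_sdiff hA hB (P.disjoint hA hB hAB) _ _
  have hm : m ∉ H P := by
    rw [H_eq_sup_eraseMin]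
    obtain h | h : m = A.min' _ ∨ m = B.min' _ := max_choice _ _ <;> rw [h]
    · exact P.min'_notMem_sup_eraseMin hA _
    · exact P.min'_notMem_sup_eraseMin hB _
  exact ⟨hQP, by rw [hQP, card_insert_of_notMem hm]⟩
end

section
/- For the map H : P_n → Π_n, the image under H of any saturated chain from the discrete partition to a partition 𝒰 is a saturated chain in Π_n from ∅ to H(𝒰). -/
open Finset

lemma mem_H {n : ℕ} {P : Finpartition (Finset.range (n + 1))} {x : ℕ} :
    x ∈ H P ↔ ∃ U : Finset ℕ, ∃ hU : U ∈ P.parts,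
      x ∈ U.erase (U.min' (P.nonempty_of_mem_parts hU)) := by
  simp only [H, Finset.mem_sup, Finset.mem_attach, true_and, Subtype.exists]

lemma parts_eq_of_mem {n : ℕ} {P : Finpartition (Finset.range (n + 1))}
    {U V : Finset ℕ} (hU : U ∈ P.parts) (hV : V ∈ P.parts) {x : ℕ}
    (hxU : x ∈ U) (hxV : x ∈ V) : U = V := by
  by_contra hne
  exact (Finset.disjoint_left.1 (P.disjoint hU hV hne)) hxU hxV

lemma H_mono {n : ℕ} {P Q : Finpartition (Finset.range (n + 1))} (h : P ≤ Q) :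
    H P ⊆ H Q := by
  intro x hx
  obtain ⟨U, hU, hx⟩ := mem_H.1 hx
  obtain ⟨V, hV, hUV⟩ := h hU
  have hxU : x ∈ U := Finset.mem_of_mem_erase hx
  have hmin : V.min' (Q.nonempty_of_mem_parts hV) ≤ U.min' (P.nonempty_of_mem_parts hU) :=
    Finset.min'_le _ _ (hUV (Finset.min'_mem _ _))
  have hlt : U.min' (P.nonempty_of_mem_parts hU) < x :=
    lt_of_le_of_ne (Finset.min'_le _ _ hxU) (Ne.symm (Finset.ne_of_mem_erase hx))
  exact mem_H.2 ⟨V, hV, Finset.mem_erase.2 ⟨(lt_of_le_of_lt hmin hlt).ne', hUV hxU⟩⟩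

lemma H_card {n : ℕ} (P : Finpartition (Finset.range (n + 1))) :
    (H P).card + P.parts.card = n + 1 := by
  classical
  have hdisj : ∀ U ∈ P.parts.attach, ∀ V ∈ P.parts.attach, U ≠ V →
      Disjoint (U.1.erase (U.1.min' (P.nonempty_of_mem_parts U.2)))
        (V.1.erase (V.1.min' (P.nonempty_of_mem_parts V.2))) := by
    rintro ⟨U, hU⟩ - ⟨V, hV⟩ - hne
    have : U ≠ V := fun h => hne (Subtype.ext h)
    exact Disjoint.mono (Finset.erase_subset _ _) (Finset.erase_subset _ _)
      (P.disjoint hU hV this)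
  have hsum : (H P).card = ∑ U ∈ P.parts.attach,
      (U.1.erase (U.1.min' (P.nonempty_of_mem_parts U.2))).card := by
    rw [H, Finset.sup_eq_biUnion, Finset.card_biUnion hdisj]
  have hcard : ∀ U : {x // x ∈ P.parts},
      (U.1.erase (U.1.min' (P.nonempty_of_mem_parts U.2))).card + 1 = U.1.card := by
    rintro ⟨U, hU⟩
    rw [Finset.card_erase_of_mem (Finset.min'_mem _ _)]
    exact Nat.succ_pred_eq_of_pos (Finset.card_pos.2 (P.nonempty_of_mem_parts hU))
  calc (H P).card + P.parts.card
      = ∑ U ∈ P.parts.attach,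
          ((U.1.erase (U.1.min' (P.nonempty_of_mem_parts U.2))).card + 1) := by
        rw [Finset.sum_add_distrib, ← hsum, Finset.sum_const, Finset.card_attach, smul_eq_mul,
          mul_one]
    _ = ∑ U ∈ P.parts.attach, U.1.card := by
        exact Finset.sum_congr rfl fun U _ => hcard U
    _ = ∑ U ∈ P.parts, U.card := Finset.sum_attach _ _
    _ = n + 1 := by rw [P.sum_card_parts, Finset.card_range]

/-- Merging two parts of a finpartition. -/
def Finpartition.merge {n : ℕ} (P : Finpartition (Finset.range (n + 1)))
    (A B : Finset ℕ) (hA : A ∈ P.parts) (hB : B ∈ P.parts) (hAB : A ≠ B) :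
    Finpartition (Finset.range (n + 1)) where
  parts := insert (A ∪ B) ((P.parts.erase A).erase B)
  supIndep := by
    rw [Finset.supIndep_iff_pairwiseDisjoint]
    intro U hU V hV hne
    simp only [Finset.coe_insert, Set.mem_insert_iff, Finset.mem_coe] at hU hV
    have hrest : ∀ W, W ∈ (P.parts.erase A).erase B → W ∈ P.parts := fun W hW =>
      Finset.mem_of_mem_erase (Finset.mem_of_mem_erase hW)
    rcases hU with rfl | hU <;> rcases hV with rfl | hV
    · exact absurd rfl hne
    · have hVA : V ≠ A := Finset.ne_of_mem_erase (Finset.mem_of_mem_erase hV)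
      have hVB : V ≠ B := Finset.ne_of_mem_erase hV
      simp only [Function.onFun, id, Finset.disjoint_union_left]
      exact ⟨P.disjoint hA (hrest V hV) (Ne.symm hVA), P.disjoint hB (hrest V hV) (Ne.symm hVB)⟩
    · have hUA : U ≠ A := Finset.ne_of_mem_erase (Finset.mem_of_mem_erase hU)
      have hUB : U ≠ B := Finset.ne_of_mem_erase hU
      simp only [Function.onFun, id, Finset.disjoint_union_right]
      exact ⟨P.disjoint (hrest U hU) hA hUA, P.disjoint (hrest U hU) hB hUB⟩
    · exact P.disjoint (hrest U hU) (hrest V hV) hne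
  sup_parts := by
    have h1 : B ∈ P.parts.erase A := Finset.mem_erase.2 ⟨Ne.symm hAB, hB⟩
    have h2 : P.parts = insert A (insert B ((P.parts.erase A).erase B)) := by
      rw [Finset.insert_erase h1, Finset.insert_erase hA]
    have := P.sup_parts
    rw [h2] at this
    simp only [Finset.sup_insert, id] at this ⊢
    rw [← sup_assoc] at this
    exact this
  bot_notMem := by
    simp only [Finset.mem_insert, Finset.bot_eq_empty]
    rintro (h | h)
    · exact (((P.nonempty_of_mem_parts hA).mono Finset.subset_union_left)).ne_empty h.symm
    · exact P.bot_notMem (Finset.mem_of_mem_erase (Finset.mem_of_mem_erase h))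

lemma cover_parts_card {n : ℕ} {P Q : Finpartition (Finset.range (n + 1))}
    (h : P ⋖ Q) : P.parts.card = Q.parts.card + 1 := by
  classical
  have hle : P ≤ Q := h.le
  -- find a part A of P not a part of Q
  have hne : P ≠ Q := h.lt.ne
  have hex : ∃ A ∈ P.parts, A ∉ Q.parts := by
    by_contra hc
    push_neg at hc
    apply hne
    have hsub : P.parts ⊆ Q.parts := hc
    have : Q.parts ⊆ P.parts := by
      intro V hV
      by_contra hVP
      -- V is disjoint from all parts of P (which are parts of Q different from V)
      have hdisj : ∀ U ∈ P.parts, Disjoint U V := by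
        intro U hU
        exact Q.disjoint (hsub hU) hV (fun hUV => hVP (hUV ▸ hU))
      have : Disjoint (Finset.range (n + 1)) V := by
        rw [← P.sup_parts]
        exact Finset.disjoint_sup_left.2 hdisj
      have hVs : V ⊆ Finset.range (n + 1) := Q.le hV
      have hVe : V = ∅ := Finset.eq_empty_of_forall_notMem fun x hx =>
        Finset.disjoint_left.1 this (hVs hx) hx
      exact Q.ne_bot hV (by rw [Finset.bot_eq_empty]; exact hVe)
    exact Finpartition.ext (Finset.Subset.antisymm hsub this)
  obtain ⟨A, hA, hAQ⟩ := hex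
  obtain ⟨V, hV, hAV⟩ := hle hA
  have hAneV : A ≠ V := fun hAV => hAQ (hAV ▸ hV)
  have hAsV : A ⊂ V := lt_of_le_of_ne hAV hAneV
  obtain ⟨x, hxV, hxA⟩ := Finset.exists_of_ssubset hAsV
  have hxs : x ∈ Finset.range (n + 1) := Q.le hV hxV
  obtain ⟨B, hB, hxB⟩ := P.exists_mem hxs
  have hBA : B ≠ A := fun hBA => hxA (hBA ▸ hxB)
  have hBV : B ⊆ V := by
    obtain ⟨W, hW, hBW⟩ := hle hB
    have : W = V := parts_eq_of_mem hW hV (hBW hxB) hxV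
    exact this ▸ hBW
  -- the merged partition
  set R := P.merge A B hA hB (Ne.symm hBA) with hR
  have hRparts : R.parts = insert (A ∪ B) ((P.parts.erase A).erase B) := rfl
  have hAB_not : A ∪ B ∉ (P.parts.erase A).erase B := by
    intro hmem
    have hABparts : A ∪ B ∈ P.parts := Finset.mem_of_mem_erase (Finset.mem_of_mem_erase hmem)
    have hne' : A ∪ B ≠ A := Finset.ne_of_mem_erase (Finset.mem_of_mem_erase hmem)
    have := P.disjoint hABparts hA hne'
    obtain ⟨a, ha⟩ := P.nonempty_of_mem_parts hA
    exact Finset.disjoint_left.1 this (Finset.mem_union_left _ ha) ha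
  have hPR : P ≤ R := by
    intro C hC
    by_cases hCA : C = A
    · exact ⟨A ∪ B, Finset.mem_insert_self _ _, hCA ▸ Finset.subset_union_left⟩
    by_cases hCB : C = B
    · exact ⟨A ∪ B, Finset.mem_insert_self _ _, hCB ▸ Finset.subset_union_right⟩
    · exact ⟨C, Finset.mem_insert_of_mem (Finset.mem_erase.2 ⟨hCB,
        Finset.mem_erase.2 ⟨hCA, hC⟩⟩), le_rfl⟩
  have hPneR : P ≠ R := by
    intro hPQ
    have hAR : A ∈ R.parts := hPQ ▸ hA
    rw [hRparts, Finset.mem_insert] at hAR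
    rcases hAR with hAR | hAR
    · obtain ⟨b, hb⟩ := P.nonempty_of_mem_parts hB
      have : b ∈ A := hAR ▸ Finset.mem_union_right _ hb
      exact Finset.disjoint_left.1 (P.disjoint hA hB (Ne.symm hBA)) this hb
    · exact (Finset.ne_of_mem_erase (Finset.mem_of_mem_erase hAR)) rfl
  have hRQ : R ≤ Q := by
    intro C hC
    rw [hRparts, Finset.mem_insert] at hC
    rcases hC with rfl | hC
    · exact ⟨V, hV, Finset.union_subset hAV hBV⟩
    · exact hle (Finset.mem_of_mem_erase (Finset.mem_of_mem_erase hC))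
  have hReqQ : R = Q := by
    by_contra hRneQ
    exact h.2 (lt_of_le_of_ne hPR hPneR) (lt_of_le_of_ne hRQ hRneQ)
  have hBmem : B ∈ P.parts.erase A := Finset.mem_erase.2 ⟨hBA, hB⟩
  have : Q.parts.card = ((P.parts.erase A).erase B).card + 1 := by
    rw [← hReqQ, hRparts, Finset.card_insert_of_notMem hAB_not]
  rw [this, Finset.card_erase_of_mem hBmem, Finset.card_erase_of_mem hA]
  have h2 : 2 ≤ P.parts.card := by
    have : ({A, B} : Finset (Finset ℕ)).card = 2 := by
      rw [Finset.card_insert_of_notMem (by simpa using hBA.symm), Finset.card_singleton]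
    rw [← this]
    exact Finset.card_le_card (by intro x hx; simp at hx; rcases hx with rfl | rfl <;> assumption)
  omega

theorem stmt_5 (n k : ℕ) (c : ℕ → Finpartition (Finset.range (n + 1)))
    (h0 : c 0 = ⊥) (hcov : ∀ i < k, c i ⋖ c (i + 1)) :
    H (c 0) = ∅ ∧ ∀ i < k, H (c i) ⋖ H (c (i + 1)) := by
  constructor
  · rw [h0]
    have hc : (H (⊥ : Finpartition (Finset.range (n + 1)))).card +
        (⊥ : Finpartition (Finset.range (n + 1))).parts.card = n + 1 := H_card _
    rw [Finpartition.card_bot, Finset.card_range] at hc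
    exact Finset.card_eq_zero.1 (by omega)
  · intro i hi
    have hcov' := hcov i hi
    have hsub : H (c i) ⊆ H (c (i + 1)) := H_mono hcov'.le
    have h1 : (H (c i)).card + (c i).parts.card = n + 1 := H_card _
    have h2 : (H (c (i + 1))).card + (c (i + 1)).parts.card = n + 1 := H_card _
    have h3 : (c i).parts.card = (c (i + 1)).parts.card + 1 := cover_parts_card hcov'
    rw [Finset.covBy_iff_card_sdiff_eq_one]
    refine ⟨hsub, ?_⟩
    rw [Finset.card_sdiff_of_subset hsub]
    omega
end

section
/- The number of maximal chains in the partition lattice of {0,1,...,n} (from the discrete partition to the indiscrete partition) equals (n+1)! · n! / 2^n. -/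
/-!
In the partition lattice each covering step merges exactly two blocks, so a partition with `m`
blocks has `m.choose 2` upper covers and every step lowers the number of blocks by one. Starting
from the discrete partition of an `(n + 1)`-set, a saturated chain of length `n` therefore makes
successive choices among `(n + 1).choose 2, n.choose 2, …, 2.choose 2` pairs of blocks, and it
necessarily ends at the one-block partition. Since `2 * m.choose 2 = m * (m - 1)`, the product
equals `(n + 1)! * n! / 2 ^ n`.
-/

open Finset
open scoped Nat

namespace Finpartition

section Merge

variable {α : Type*} [DistribLattice α] [OrderBot α] [DecidableEq α] {s : α}
  {P Q : Finpartition s} {t : Finset α}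

def merge_s14 (P : Finpartition s) (t : Finset α) (ht : t ∈ P.parts.powersetCard 2) :
    Finpartition s where
  parts := insert (t.sup id) (P.parts \ t)
  supIndep := by
    have htP := (mem_powersetCard.1 ht).1
    rw [supIndep_iff_pairwiseDisjoint, coe_insert]
    refine (P.disjoint.subset (by simp)).insert fun d hd _ ↦
      Finset.disjoint_sup_left.2 fun a ha ↦ ?_
    have hd := mem_sdiff.1 hd
    exact P.disjoint (htP ha) hd.1 (ne_of_mem_of_not_mem ha hd.2)
  sup_parts := by
    rw [Finset.sup_insert, id, ← Finset.sup_union,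
      union_sdiff_of_subset (mem_powersetCard.1 ht).1, P.sup_parts]
  bot_notMem h := by
    obtain ⟨a, ha⟩ := card_pos.1 ((mem_powersetCard.1 ht).2 ▸ two_pos)
    rcases mem_insert.1 h with h | h
    · exact P.ne_bot ((mem_powersetCard.1 ht).1 ha) ((Finset.sup_eq_bot_iff _ _).1 h.symm a ha)
    · exact P.bot_notMem (mem_sdiff.1 h).1

theorem parts_merge (ht : t ∈ P.parts.powersetCard 2) :
    (P.merge_s14 t ht).parts = insert (t.sup id) (P.parts \ t) := rfl

theorem sup_notMem_parts (ht : t ∈ P.parts.powersetCard 2) : t.sup id ∉ P.parts := by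
  intro h
  obtain ⟨htP, ht₂⟩ := mem_powersetCard.1 ht
  obtain ⟨a, b, hab, rfl⟩ := card_eq_two.1 ht₂
  have key : ∀ c ∈ ({a, b} : Finset α), c = ({a, b} : Finset α).sup id := fun c hc ↦
    P.disjoint.eq_of_le (htP hc) h (P.ne_bot (htP hc)) (le_sup (f := id) hc)
  exact hab ((key a (by simp)).trans (key b (by simp)).symm)

theorem card_parts_merge (ht : t ∈ P.parts.powersetCard 2) :
    #(P.merge_s14 t ht).parts + 1 = #P.parts := by
  obtain ⟨htP, ht₂⟩ := mem_powersetCard.1 ht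
  rw [parts_merge, card_insert_of_notMem fun h ↦ sup_notMem_parts ht (mem_sdiff.1 h).1,
    card_sdiff_of_subset htP, ht₂]
  have := card_le_card htP
  omega

theorem parts_sdiff_parts_merge (ht : t ∈ P.parts.powersetCard 2) :
    P.parts \ (P.merge_s14 t ht).parts = t := by
  have htP := (mem_powersetCard.1 ht).1
  ext a
  have : a ∈ t → a ≠ t.sup id := fun ha h ↦ sup_notMem_parts ht (h ▸ htP ha)
  simp only [parts_merge, mem_sdiff, mem_insert]
  tauto

theorem le_merge (ht : t ∈ P.parts.powersetCard 2) : P ≤ P.merge_s14 t ht := by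
  intro b hb
  by_cases hbt : b ∈ t
  · exact ⟨t.sup id, mem_insert_self _ _, le_sup (f := id) hbt⟩
  · exact ⟨b, mem_insert_of_mem (mem_sdiff.2 ⟨hb, hbt⟩), le_rfl⟩

theorem lt_merge (ht : t ∈ P.parts.powersetCard 2) : P < P.merge_s14 t ht :=
  (le_merge ht).lt_of_ne fun h ↦ by
    have := card_parts_merge ht
    rw [← h] at this
    omega

theorem merge_le (hPQ : P ≤ Q) (ht : t ∈ P.parts.powersetCard 2) {c : α} (hc : c ∈ Q.parts)
    (htc : t.sup id ≤ c) : P.merge_s14 t ht ≤ Q := by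
  intro b hb
  rcases mem_insert.1 hb with rfl | hb
  · exact ⟨c, hc, htc⟩
  · exact hPQ (mem_sdiff.1 hb).1

end Merge

section Covers

variable {α : Type*} [DecidableEq α] {s : Finset α} {P Q : Finpartition s}

theorem exists_merge_le_of_lt (h : P < Q) :
    ∃ t, ∃ ht : t ∈ P.parts.powersetCard 2, P.merge_s14 t ht ≤ Q := by
  obtain ⟨c, hcQ, hcP⟩ : ∃ c ∈ Q.parts, c ∉ P.parts := by
    by_contra! hQP
    exact h.not_ge fun c hc ↦ ⟨c, hQP c hc, le_rfl⟩
  obtain ⟨a, haP, hac⟩ := exists_le_of_le h.le hcQ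
  obtain ⟨x, hxc, hxa⟩ := not_subset.1 fun hca ↦ hcP (le_antisymm hac hca ▸ haP)
  obtain ⟨b, hbP, hxb⟩ := P.exists_mem (Q.le hcQ hxc)
  obtain ⟨c', hc'Q, hbc'⟩ := h.le hbP
  obtain rfl : c' = c := Q.eq_of_mem_parts hc'Q hcQ (hbc' hxb) hxc
  have hab : a ≠ b := fun hab ↦ hxa (hab ▸ hxb)
  refine ⟨{a, b}, mem_powersetCard.2 ⟨insert_subset haP (singleton_subset_iff.2 hbP),
    card_pair hab⟩, merge_le h.le _ hc'Q ?_⟩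
  simpa using union_subset hac hbc'

theorem card_parts_lt_of_lt (h : P < Q) : #Q.parts < #P.parts := by
  obtain ⟨t, ht, hle⟩ := exists_merge_le_of_lt h
  have := card_mono hle
  have := card_parts_merge ht
  omega

theorem covBy_merge (ht : t ∈ P.parts.powersetCard 2) : P ⋖ P.merge_s14 t ht := by
  refine ⟨lt_merge ht, fun R hPR hRM ↦ ?_⟩
  have := card_parts_lt_of_lt hPR
  have := card_parts_lt_of_lt hRM
  have := card_parts_merge ht
  omega

theorem covBy_iff_exists_merge :
    P ⋖ Q ↔ ∃ t, ∃ ht : t ∈ P.parts.powersetCard 2, P.merge_s14 t ht = Q := by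
  refine ⟨fun h ↦ ?_, fun ⟨t, ht, hQ⟩ ↦ hQ ▸ covBy_merge ht⟩
  obtain ⟨t, ht, hle⟩ := exists_merge_le_of_lt h.lt
  exact ⟨t, ht, hle.eq_of_not_lt (h.2 (lt_merge ht))⟩

theorem card_parts_add_one_of_covBy (h : P ⋖ Q) : #Q.parts + 1 = #P.parts := by
  obtain ⟨t, ht, rfl⟩ := covBy_iff_exists_merge.1 h
  exact card_parts_merge ht

theorem card_covBy (P : Finpartition s) : Nat.card {Q // P ⋖ Q} = (#P.parts).choose 2 := by
  classical
  rw [Nat.card_eq_fintype_card, Fintype.card_subtype, ← card_powersetCard]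
  symm
  refine card_bij (fun t ht ↦ P.merge_s14 t ht) (fun t ht ↦ by simpa using covBy_merge ht)
    (fun t₁ ht₁ t₂ ht₂ h ↦ ?_) fun Q hQ ↦ covBy_iff_exists_merge.1 (mem_filter.1 hQ).2
  rw [← parts_sdiff_parts_merge ht₁, h, parts_sdiff_parts_merge]

theorem eq_top_of_card_parts_le_one (hs : s.Nonempty) (h : #P.parts ≤ 1) : P = ⊤ := by
  by_contra hP
  have := card_parts_lt_of_lt (lt_top_iff_ne_top.2 hP)
  have htop : #(⊤ : Finpartition s).parts = 0 := by omega
  exact hs.ne_empty (parts_eq_empty_iff.1 (card_eq_zero.1 htop))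

end Covers

end Finpartition

abbrev RelChain {α : Type*} (r : α → α → Prop) (a : α) (k : ℕ) : Type _ :=
  {c : Fin (k + 1) → α // c 0 = a ∧ ∀ i : Fin k, r (c i.castSucc) (c i.succ)}

namespace RelChain

variable {α : Type*} {r : α → α → Prop} {a : α} {k : ℕ}

theorem grade_add_val {ρ : α → ℕ} (hρ : ∀ x y, r x y → ρ y + 1 = ρ x)
    (c : RelChain r a k) (i : Fin (k + 1)) : ρ (c.1 i) + i = ρ a := by
  induction i using Fin.induction with
  | zero => simp [c.2.1]
  | succ i ih =>
    have := hρ _ _ (c.2.2 i)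
    simp only [Fin.val_succ, Fin.val_castSucc] at *
    omega

variable (r a k) in
def snocEquiv : RelChain r a (k + 1) ≃ Σ c : RelChain r a k, {y // r (c.1 (Fin.last k)) y} where
  toFun c := ⟨⟨Fin.init c.1, c.2.1, fun i ↦ by simpa [Fin.init] using c.2.2 i.castSucc⟩,
    c.1 (Fin.last _), by simpa [Fin.init] using c.2.2 (Fin.last k)⟩
  invFun p := ⟨Fin.snoc p.1.1 p.2.1, by simpa using p.1.2.1,
    Fin.lastCases (by simpa using p.2.2) fun i ↦ by
      rw [Fin.succ_castSucc, Fin.snoc_castSucc, Fin.snoc_castSucc]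
      exact p.1.2.2 i⟩
  left_inv c := Subtype.ext (Fin.snoc_init_self c.1)
  right_inv p := Sigma.subtype_ext (Subtype.ext (Fin.init_snoc (α := fun _ ↦ α) _ _))
    (Fin.snoc_last (α := fun _ ↦ α) _ _)

theorem card [Finite α] {ρ : α → ℕ} {F : ℕ → ℕ}
    (hρ : ∀ x y, r x y → ρ y + 1 = ρ x) (hF : ∀ x, Nat.card {y // r x y} = F (ρ x)) :
    Nat.card (RelChain r a k) = ∏ j ∈ range k, F (ρ a - j) := by
  induction k with
  | zero =>
    rw [prod_range_zero, Nat.card_eq_one_iff_unique]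
    refine ⟨⟨fun c d ↦ Subtype.ext (funext fun i ↦ ?_)⟩,
      ⟨⟨fun _ ↦ a, rfl, Fin.elim0⟩⟩⟩
    rw [Fin.fin_one_eq_zero i, c.2.1, d.2.1]
  | succ k ih =>
    have := Fintype.ofFinite (RelChain r a k)
    have hlast (c : RelChain r a k) : ρ (c.1 (Fin.last k)) = ρ a - k := by
      have := c.grade_add_val hρ (Fin.last k)
      simp only [Fin.val_last] at this
      omega
    rw [Nat.card_congr (snocEquiv r a k), Nat.card_sigma, prod_range_succ, ← ih]
    simp only [hF, hlast]
    rw [sum_const, Finset.card_univ, smul_eq_mul, Nat.card_eq_fintype_card]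

end RelChain

theorem two_pow_mul_prod_choose_two (n : ℕ) :
    2 ^ n * ∏ j ∈ range n, (n + 1 - j).choose 2 = (n + 1)! * n ! := by
  induction n with
  | zero => simp
  | succ n ih =>
    have h := Nat.add_one_mul_choose_eq (n + 1) 1
    rw [Nat.choose_one_right] at h
    simp only [prod_range_succ', Nat.add_sub_add_right, Nat.sub_zero]
    calc 2 ^ (n + 1) * ((∏ j ∈ range n, (n + 1 - j).choose 2) * (n + 1 + 1).choose 2)
        = (2 ^ n * ∏ j ∈ range n, (n + 1 - j).choose 2) * ((n + 1 + 1).choose 2 * 2) := by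
          ring
      _ = (n + 1 + 1)! * (n + 1)! := by
          rw [ih, ← h, Nat.factorial_succ (n + 1), Nat.factorial_succ n]
          ring

theorem stmt_14 (n : ℕ) :
    Nat.card {c : Fin (n + 1) → Finpartition (Finset.range (n + 1)) //
        c 0 = ⊥ ∧ c (Fin.last n) = ⊤ ∧ ∀ i : Fin n, c i.castSucc ⋖ c i.succ} =
      (n + 1).factorial * n.factorial / 2 ^ n := by
  have hbot : #(⊥ : Finpartition (range (n + 1))).parts = n + 1 := by
    rw [Finpartition.card_bot, card_range]
  have hgrade (P Q : Finpartition (range (n + 1))) (h : P ⋖ Q) : #Q.parts + 1 = #P.parts :=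
    Finpartition.card_parts_add_one_of_covBy h
  have hlast (c : RelChain (· ⋖ ·) (⊥ : Finpartition (range (n + 1))) n) :
      c.1 (Fin.last n) = ⊤ := by
    have := c.grade_add_val hgrade (Fin.last n)
    rw [Fin.val_last, hbot] at this
    exact Finpartition.eq_top_of_card_parts_le_one nonempty_range_add_one (by omega)
  have hchains : {c : Fin (n + 1) → Finpartition (range (n + 1)) //
      c 0 = ⊥ ∧ c (Fin.last n) = ⊤ ∧ ∀ i : Fin n, c i.castSucc ⋖ c i.succ} ≃
      RelChain (· ⋖ ·) (⊥ : Finpartition (range (n + 1))) n :=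
    Equiv.subtypeEquivRight fun c ↦
      ⟨fun ⟨h0, _, h⟩ ↦ ⟨h0, h⟩, fun h ↦ ⟨h.1, hlast ⟨c, h⟩, h.2⟩⟩
  rw [Nat.card_congr hchains,
    RelChain.card (F := (·.choose 2)) hgrade Finpartition.card_covBy, hbot]
  exact Nat.eq_div_of_mul_eq_right (by positivity) (two_pow_mul_prod_choose_two n)
end

section
/- If 𝒰 ≤ 𝒱 strictly in the partition lattice of {0,1,...,n}, then H(𝒰) is a strict subset of H(𝒱); i.e., H is strictly monotone. -/
namespace Finpartition

variable {α : Type*} [DecidableEq α] {s : Finset α} {P Q : Finpartition s}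

theorem subset_of_le_of_mem_of_mem (hPQ : P ≤ Q) {U V : Finset α} (hU : U ∈ P.parts)
    (hV : V ∈ Q.parts) {x : α} (hxU : x ∈ U) (hxV : x ∈ V) : U ⊆ V := by
  obtain ⟨V', hV', hUV'⟩ := hPQ hU
  rwa [Q.eq_of_mem_parts hV hV' hxV (hUV' hxU)]

theorem exists_two_parts_subset_of_lt (hPQ : P < Q) :
    ∃ V ∈ Q.parts, ∃ U ∈ P.parts, ∃ W ∈ P.parts, U ≠ W ∧ U ⊆ V ∧ W ⊆ V := by
  obtain ⟨V, hV, hVnot⟩ : ∃ V ∈ Q.parts, ∀ U ∈ P.parts, ¬V ⊆ U := by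
    by_contra! h
    exact hPQ.not_ge fun V hV => h V hV
  obtain ⟨y, hyV⟩ := Q.nonempty_of_mem_parts hV
  obtain ⟨U, hU, hyU⟩ := P.exists_mem (Q.le hV hyV)
  obtain ⟨z, hzV, hzU⟩ := Finset.not_subset.1 (hVnot U hU)
  obtain ⟨W, hW, hzW⟩ := P.exists_mem (Q.le hV hzV)
  exact ⟨V, hV, U, hU, W, hW, fun h => hzU (h ▸ hzW),
    subset_of_le_of_mem_of_mem hPQ.le hU hV hyU hyV,
    subset_of_le_of_mem_of_mem hPQ.le hW hV hzW hzV⟩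

end Finpartition

variable {n : ℕ} {P Q : Finpartition (Finset.range (n + 1))}

theorem mem_H_iff_s16 {x : ℕ} :
    x ∈ H P ↔ ∃ U, ∃ hU : U ∈ P.parts, x ∈ U ∧ x ≠ U.min' (P.nonempty_of_mem_parts hU) := by
  simp only [H, Finset.mem_sup, Finset.mem_attach, Finset.mem_erase, true_and]
  exact ⟨fun ⟨⟨U, hU⟩, hne, hx⟩ => ⟨U, hU, hx, hne⟩, fun ⟨U, hU, hx, hne⟩ => ⟨⟨U, hU⟩, hne, hx⟩⟩

theorem min'_notMem_H {U : Finset ℕ} (hU : U ∈ P.parts) :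
    U.min' (P.nonempty_of_mem_parts hU) ∉ H P := by
  rw [mem_H_iff_s16]
  rintro ⟨V, hV, hmV, hne⟩
  obtain rfl := P.eq_of_mem_parts hV hU hmV (U.min'_mem _)
  exact hne rfl

theorem H_mono_s16 (hPQ : P ≤ Q) : H P ⊆ H Q := by
  intro x hx
  rw [mem_H_iff_s16] at hx ⊢
  obtain ⟨U, hU, hxU, hne⟩ := hx
  obtain ⟨V, hV, hUV⟩ := hPQ hU
  refine ⟨V, hV, hUV hxU, fun hxV => hne ?_⟩
  have hVU := V.min'_le _ (hUV (U.min'_mem (P.nonempty_of_mem_parts hU)))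
  have hUx := U.min'_le _ hxU
  omega

theorem exists_mem_H_notMem_H_of_lt (hPQ : P < Q) : ∃ x ∈ H Q, x ∉ H P := by
  obtain ⟨V, hV, U, hU, W, hW, hUW, hUV, hWV⟩ := Finpartition.exists_two_parts_subset_of_lt hPQ
  have hmin : U.min' (P.nonempty_of_mem_parts hU) ≠ W.min' (P.nonempty_of_mem_parts hW) :=
    fun h => Finset.disjoint_left.1 (P.disjoint hU hW hUW) (U.min'_mem _) (h ▸ W.min'_mem _)
  by_cases hUmin : U.min' (P.nonempty_of_mem_parts hU) = V.min' (Q.nonempty_of_mem_parts hV)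
  · exact ⟨_, mem_H_iff_s16.2 ⟨V, hV, hWV (W.min'_mem _), fun h => hmin (hUmin.trans h.symm)⟩,
      min'_notMem_H hW⟩
  · exact ⟨_, mem_H_iff_s16.2 ⟨V, hV, hUV (U.min'_mem _), hUmin⟩, min'_notMem_H hU⟩

theorem stmt_16 (n : ℕ) : StrictMono (H (n := n)) := fun _ _ hPQ =>
  (Finset.ssubset_iff_of_subset (H_mono_s16 hPQ.le)).2 (exists_mem_H_notMem_H_of_lt hPQ)
end
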